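/- Let G(λ) ∈ F(λ)^{p×m} and Ĝ(λ) ∈ F(λ)^{(p+s)×(m+s)} with s ≥ 0, and let U(λ), V(λ) be unimodular polynomial matrices with U(λ)Ĝ(λ)V(λ) = Diag(G(λ), I_s). (a) If H(λ) is a right polynomial basis of G(λ), then V(λ)·[H(λ); 0] is a right polynomial basis of Ĝ(λ). (b) If Ĥ(λ) is a right polynomial basis of Ĝ(λ), then V(λ)^{-1}Ĥ(λ) = [H(λ); 0] for some right polynomial basis H(λ) of G(λ). -/

import Mathlib

/-!
Over `F(λ)` the matrices `U` and `V` are invertible, so `ker Ĝ = V · ker Diag(G, I_s)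
= V · [ker G; 0]`. The injective map `z ↦ V [z; 0]` sends the columns of `H` to those of
`V [H; 0]`, hence carries bases of `ker G` to bases of `ker Ĝ` and back. For (b), `V⁻¹` is
polynomial because `V` is unimodular, and `V⁻¹ Ĥ` has zero bottom block because every column
of `Ĥ` lies in `V · [ker G; 0]`.
-/

open Polynomial Matrix

noncomputable section

variable {F : Type*} [Field F]

/-- The natural embedding of a polynomial matrix into the rational functions. -/
def toRF {a b : Type*} (M : Matrix a b (Polynomial F)) : Matrix a b (RatFunc F) :=
  M.map (algebraMap (Polynomial F) (RatFunc F))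

/-- A square polynomial matrix is unimodular if its determinant is a unit. -/
def Unimodular {a : Type*} [Fintype a] [DecidableEq a] (U : Matrix a a (Polynomial F)) : Prop :=
  IsUnit U.det

/-- The columns of the polynomial matrix `N`, regarded as rational vectors, form a basis of
the right null-space of the rational matrix `M`. -/
def IsRightPolyBasis {a b : Type*} [Fintype a] [Fintype b] {l : ℕ}
    (M : Matrix a b (RatFunc F)) (N : Matrix b (Fin l) (Polynomial F)) : Prop :=
  LinearIndependent (RatFunc F) (fun j : Fin l => (toRF N)ᵀ j) ∧
    Submodule.span (RatFunc F) (Set.range fun j : Fin l => (toRF N)ᵀ j) =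
      LinearMap.ker M.mulVecLin

namespace Matrix

variable {R : Type*} [CommRing R] {p m n s : Type*} [Fintype m] [Fintype n] [Fintype s]

lemma ker_mulVecLin_fromBlocks_zero_zero_one [DecidableEq s] (G : Matrix p m R) :
    LinearMap.ker (fromBlocks G 0 0 (1 : Matrix s s R)).mulVecLin =
      (LinearMap.ker G.mulVecLin).map Sum.elimZeroRight := by
  ext y
  simp only [LinearMap.mem_ker, mulVecLin_apply, Submodule.mem_map, fromBlocks_mulVec,
    zero_mulVec, one_mulVec, add_zero, zero_add, ← Sum.elim_zero_zero, Sum.elim_eq_iff]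
  constructor
  · rintro ⟨hG, hs⟩
    refine ⟨y ∘ Sum.inl, hG, ?_⟩
    ext (i | i)
    · rfl
    · exact (congrFun hs i).symm
  · rintro ⟨z, hz, rfl⟩
    exact ⟨hz, rfl⟩

lemma ker_mulVecLin_eq_map_of_mul_mul_eq [DecidableEq n] [Fintype p] [DecidableEq p]
    {M : Matrix p n R} {U : Matrix p p R} {V : Matrix n n R} {D : Matrix p n R}
    (hU : IsUnit U.det) (hV : IsUnit V.det) (h : U * M * V = D) :
    LinearMap.ker M.mulVecLin = (LinearMap.ker D.mulVecLin).map V.mulVecLin := by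
  have hUinj : LinearMap.ker U.mulVecLin = ⊥ :=
    LinearMap.ker_eq_bot.mpr (mulVec_injective_of_isUnit ((isUnit_iff_isUnit_det U).mpr hU))
  have hVsurj : Function.Surjective V.mulVecLin :=
    mulVec_surjective_iff_isUnit.mpr ((isUnit_iff_isUnit_det V).mpr hV)
  rw [← h, mulVecLin_mul, mulVecLin_mul, LinearMap.ker_comp,
    LinearMap.ker_comp_of_ker_eq_bot _ hUinj, Submodule.map_comap_eq_of_surjective hVsurj]

end Matrix

lemma toRF_mul {a b c : Type*} [Fintype b] (A : Matrix a b F[X]) (B : Matrix b c F[X]) :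
    toRF (A * B) = toRF A * toRF B :=
  Matrix.map_mul

lemma toRF_one {a : Type*} [Fintype a] [DecidableEq a] : toRF (1 : Matrix a a F[X]) = 1 :=
  Matrix.map_one _ (map_zero _) (map_one _)

lemma toRF_injective {a b : Type*} :
    Function.Injective (toRF : Matrix a b F[X] → Matrix a b (RatFunc F)) :=
  Matrix.map_injective (IsFractionRing.injective F[X] (RatFunc F))

lemma Unimodular.isUnit_det_toRF {a : Type*} [Fintype a] [DecidableEq a] {V : Matrix a a F[X]}
    (hV : Unimodular V) : IsUnit (toRF V).det := by
  rw [toRF, ← RingHom.mapMatrix_apply, ← RingHom.map_det]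
  exact hV.map _

lemma transpose_toRF_mul_apply {a b c : Type*} [Fintype b] (A : Matrix a b F[X])
    (B : Matrix b c F[X]) (j : c) : (toRF (A * B))ᵀ j = toRF A *ᵥ (toRF B)ᵀ j := by
  ext i
  simp [toRF_mul, Matrix.mul_apply, Matrix.mulVec, dotProduct]

lemma transpose_toRF_fromRows_zero_apply {a s c : Type*} (H : Matrix a c F[X]) (j : c) :
    (toRF (fromRows H (0 : Matrix s c F[X])))ᵀ j = Sum.elimZeroRight ((toRF H)ᵀ j) := by
  ext (i | i) <;> simp [toRF]

lemma isRightPolyBasis_iff_of_ker_eq_map {a b a' b' : Type*} [Fintype a] [Fintype b] [Fintype a']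
    [Fintype b'] {l : ℕ} {M : Matrix a b (RatFunc F)} {M' : Matrix a' b' (RatFunc F)}
    {N : Matrix b (Fin l) F[X]} {N' : Matrix b' (Fin l) F[X]}
    (f : (b → RatFunc F) →ₗ[RatFunc F] (b' → RatFunc F)) (hf : LinearMap.ker f = ⊥)
    (hker : LinearMap.ker M'.mulVecLin = (LinearMap.ker M.mulVecLin).map f)
    (hcols : ∀ j, (toRF N')ᵀ j = f ((toRF N)ᵀ j)) :
    IsRightPolyBasis M' N' ↔ IsRightPolyBasis M N := by
  have hcols' : (fun j => (toRF N')ᵀ j) = f ∘ fun j => (toRF N)ᵀ j := funext hcols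
  rw [IsRightPolyBasis, IsRightPolyBasis, hcols', f.linearIndependent_iff hf, Set.range_comp,
    Submodule.span_image, hker,
    (Submodule.map_injective_of_injective (LinearMap.ker_eq_bot.mp hf)).eq_iff]

lemma Unimodular.exists_eq_mul_fromRows_zero {b s c : Type*} [Fintype b] [Fintype s]
    [DecidableEq b] [DecidableEq s] {V : Matrix (b ⊕ s) (b ⊕ s) F[X]} (hV : Unimodular V)
    {N : Matrix (b ⊕ s) c F[X]}
    (hN : ∀ j, (toRF N)ᵀ j ∈ LinearMap.range ((toRF V).mulVecLin ∘ₗ Sum.elimZeroRight)) :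
    ∃ H : Matrix b c F[X], N = V * fromRows H (0 : Matrix s c F[X]) := by
  set K := V⁻¹ * N
  have hK₂ : K.toRows₂ = 0 := toRF_injective <| by
    ext i j
    obtain ⟨z, hz⟩ := hN j
    have hcol : (toRF K)ᵀ j = Sum.elimZeroRight z := by
      rw [transpose_toRF_mul_apply, ← hz, LinearMap.comp_apply, mulVecLin_apply, mulVec_mulVec,
        ← toRF_mul, nonsing_inv_mul _ hV, toRF_one, one_mulVec]
    simpa [toRF] using congrFun hcol (Sum.inr i)
  refine ⟨K.toRows₁, ?_⟩
  rw [← hK₂, fromRows_toRows]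
  exact (mul_nonsing_inv_cancel_left _ _ hV).symm

/-- Let `U Ĝ V = Diag(G, I_s)` with `U`, `V` unimodular. (a) If `H` is a
right polynomial basis of `G`, then `V·[H;0]` is a right polynomial basis of `Ĝ`. (b) If `Ĥ`
is a right polynomial basis of `Ĝ`, then `V⁻¹ Ĥ = [H;0]` for some right polynomial basis `H`
of `G`. -/
theorem rightPolyBasis_unimodular_extension
    {p m s : ℕ}
    (G : Matrix (Fin p) (Fin m) (RatFunc F))
    (Ghat : Matrix (Fin p ⊕ Fin s) (Fin m ⊕ Fin s) (RatFunc F))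
    (U : Matrix (Fin p ⊕ Fin s) (Fin p ⊕ Fin s) (Polynomial F))
    (V : Matrix (Fin m ⊕ Fin s) (Fin m ⊕ Fin s) (Polynomial F))
    (hU : Unimodular U) (hV : Unimodular V)
    (hUV : toRF U * Ghat * toRF V =
      Matrix.fromBlocks G 0 0 (1 : Matrix (Fin s) (Fin s) (RatFunc F))) :
    (∀ (l : ℕ) (H : Matrix (Fin m) (Fin l) (Polynomial F)), IsRightPolyBasis G H →
      IsRightPolyBasis Ghat
        (V * Matrix.fromRows H (0 : Matrix (Fin s) (Fin l) (Polynomial F)))) ∧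
    (∀ (l : ℕ) (Hhat : Matrix (Fin m ⊕ Fin s) (Fin l) (Polynomial F)),
      IsRightPolyBasis Ghat Hhat →
        ∃ H : Matrix (Fin m) (Fin l) (Polynomial F),
          (toRF V)⁻¹ * toRF Hhat =
            toRF (Matrix.fromRows H (0 : Matrix (Fin s) (Fin l) (Polynomial F))) ∧
          IsRightPolyBasis G H) := by
  set ι : (Fin m → RatFunc F) →ₗ[RatFunc F] (Fin m ⊕ Fin s → RatFunc F) :=
    (toRF V).mulVecLin ∘ₗ Sum.elimZeroRight
  have hι : LinearMap.ker ι = ⊥ := LinearMap.ker_eq_bot.mpr <|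
    (mulVec_injective_of_isUnit ((isUnit_iff_isUnit_det _).mpr hV.isUnit_det_toRF)).comp
      fun x y h => funext fun i => congrFun h (Sum.inl i)
  have hker : LinearMap.ker Ghat.mulVecLin = (LinearMap.ker G.mulVecLin).map ι := by
    rw [ker_mulVecLin_eq_map_of_mul_mul_eq hU.isUnit_det_toRF hV.isUnit_det_toRF hUV,
      ker_mulVecLin_fromBlocks_zero_zero_one, ← Submodule.map_comp]
  have hbasis : ∀ l (H : Matrix (Fin m) (Fin l) F[X]),
      IsRightPolyBasis Ghat (V * fromRows H (0 : Matrix (Fin s) (Fin l) F[X])) ↔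
        IsRightPolyBasis G H := fun l H =>
    isRightPolyBasis_iff_of_ker_eq_map ι hι hker fun j => by
      rw [transpose_toRF_mul_apply, transpose_toRF_fromRows_zero_apply]; rfl
  refine ⟨fun l H => (hbasis l H).mpr, fun l Hhat hHhat => ?_⟩
  obtain ⟨H, rfl⟩ := hV.exists_eq_mul_fromRows_zero fun j => by
    have hj : (toRF Hhat)ᵀ j ∈ LinearMap.ker Ghat.mulVecLin :=
      hHhat.2 ▸ Submodule.subset_span ⟨j, rfl⟩
    exact LinearMap.map_le_range (hker ▸ hj)
  exact ⟨H, by rw [toRF_mul, nonsing_inv_mul_cancel_left _ _ hV.isUnit_det_toRF],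
    (hbasis l H).mp hHhat⟩

end
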